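/- Let L be an embedded polygonal arc in ℝ³ given by vertices p₀, p₁, …, p_n (n ≥ 1). Then for every unit vector u ∈ ℝ³ and every δ > 0 there exists a unit vector u′ with ‖u′ − u‖ < δ such that the orthogonal projection π onto the orthogonal complement of the span of u′ satisfies: (i) π is injective on each edge segment [p_{i−1}, pᵢ]; (ii) every point of the plane has at most two preimages in L under π; (iii) whenever x ≠ y are points of L with π x = π y, then x and y are not vertices of L, they lie on two distinct edge segments [p_{i−1}, pᵢ] and [p_{j−1}, pⱼ] with i ≠ j, and the projected edge directions π(pᵢ − p_{i−1}) and π(pⱼ − p_{j−1}) are linearly independent; (iv) the set of points of the plane having exactly two preimages in L is finite. (Existence part of Theorem 1.1: the projection along u is δ-approximated by a projection whose image of L is an arc diagram.) -/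

import Mathlib

open Module Set

/-- ℝ³ as a Euclidean space. -/
local notation "E3" => EuclideanSpace ℝ (Fin 3)

/-- The orthogonal projection of ℝ³ onto the orthogonal complement of the span of `u`,
i.e. the projection along the vector `u` onto the plane `P_u`. -/
noncomputable def projAlong (u : E3) : E3 →L[ℝ] ↥((ℝ ∙ u)ᗮ) :=
  Submodule.orthogonalProjection ((ℝ ∙ u)ᗮ)

/-!
A direction `e` is good as soon as it avoids finitely many proper subspaces spanned by
differences of vertices, and the zero sets of finitely many nonzero quadratic forms; each of
these bad sets is the zero set of a nonzero polynomial, hence nowhere dense, so good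
directions are dense. Avoiding the plane of two coplanar edges, or of a vertex and an edge,
forces every pair of points of `L` on a line parallel to `e` to be interior points of two
skew edges, and on two skew edges there is at most one such pair. Three points of `L` on
one such line would lie on three pairwise skew edges, which puts `e` on the cone of
directions of the common transversals of those three lines; that cone is the zero set of
`transversalForm`, a quadratic form which skewness prevents from vanishing identically.
-/

open Metric Submodule

section Genericity

variable {E : Type*} [NormedAddCommGroup E] [NormedSpace ℝ E]

theorem AnalyticOnNhd.dense_setOf_ne_zero {f : E → ℝ} (hf : AnalyticOnNhd ℝ f univ)
    (hf0 : f ≠ 0) : Dense {x | f x ≠ 0} := by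
  change Dense {x | f x = 0}ᶜ
  rw [← interior_eq_empty_iff_dense_compl, eq_empty_iff_forall_notMem]
  exact fun x hx =>
    hf0 (hf.eq_of_eventuallyEq analyticOnNhd_const (mem_interior_iff_mem_nhds.1 hx))

theorem exists_mem_ball_forall_ne_zero {κ : Type*} [Finite κ] {f : κ → E → ℝ}
    (hf : ∀ k, AnalyticOnNhd ℝ (f k) univ) (hf0 : ∀ k, f k ≠ 0) (u : E) {r : ℝ} (hr : 0 < r) :
    ∃ e ∈ ball u r, ∀ k, f k e ≠ 0 := by
  have hdense : Dense (⋂ k, {x | f k x ≠ 0}) := by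
    rw [← sInter_range]
    exact (finite_range _).dense_sInter
      (forall_mem_range.2 fun k =>
        isOpen_ne_fun (continuousOn_univ.1 (hf k).continuousOn) continuous_const)
      (forall_mem_range.2 fun k => (hf k).dense_setOf_ne_zero (hf0 k))
  obtain ⟨e, hball, he⟩ := hdense.inter_open_nonempty _ isOpen_ball ⟨u, mem_ball_self hr⟩
  exact ⟨e, hball, mem_iInter.1 he⟩

theorem exists_mem_ball_forall_notMem_and_ne_zero {F : Type*} [NormedAddCommGroup F]
    [InnerProductSpace ℝ F] [FiniteDimensional ℝ F] {ι κ : Type*} [Finite ι] [Finite κ]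
    (W : ι → Submodule ℝ F) {f : κ → F → ℝ} (hf : ∀ k, AnalyticOnNhd ℝ (f k) univ) (u : F)
    {r : ℝ} (hr : 0 < r) :
    ∃ e ∈ ball u r, (∀ i, W i ≠ ⊤ → e ∉ W i) ∧ ∀ k, f k ≠ 0 → f k e ≠ 0 := by
  have hν (i : {i // W i ≠ ⊤}) : ∃ ν ∈ (W i)ᗮ, ν ≠ 0 :=
    (Submodule.ne_bot_iff _).1 (mt Submodule.orthogonal_eq_bot_iff.1 i.2)
  choose ν hνW hν0 using hν
  obtain ⟨e, he, hne⟩ := exists_mem_ball_forall_ne_zero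
    (f := Sum.elim (fun i x => inner ℝ (ν i) x) fun k : {k // f k ≠ 0} => f k)
    (by rintro (i | k); exacts [(innerSL ℝ (ν i)).analyticOnNhd univ, hf k])
    (by rintro (i | k); exacts [fun h => hν0 i (inner_self_eq_zero.1 (congrFun h (ν i))), k.2])
    u hr
  exact ⟨e, he, fun i hi heW => hne (.inl ⟨i, hi⟩) (inner_left_of_mem_orthogonal heW (hνW ⟨i, hi⟩)),
    fun k hk => hne (.inr ⟨k, hk⟩)⟩

theorem eq_of_sub_mem_of_mem_span_singleton {F : Type*} [AddCommGroup F] [Module ℝ F]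
    {W : Submodule ℝ F} {e x y : F} (he : e ∉ W) (hW : x - y ∈ W) (hxy : x - y ∈ ℝ ∙ e) :
    x = y :=
  sub_eq_zero.1 (disjoint_def.1 (disjoint_span_singleton.2 fun h => (he h).elim) _ hW hxy)

end Genericity

section TripleProduct

noncomputable def triple (a b c : E3) : ℝ :=
  (EuclideanSpace.basisFun (Fin 3) ℝ).toBasis.det ![a, b, c]

variable {a b c d e : E3}

theorem triple_apply (a b c : E3) : triple a b c =
    a 0 * (b 1 * c 2 - b 2 * c 1) - a 1 * (b 0 * c 2 - b 2 * c 0) +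
      a 2 * (b 0 * c 1 - b 1 * c 0) := by
  simp [triple, Basis.det_apply, Matrix.det_fin_three, Basis.toMatrix_apply]
  ring

theorem triple_rotate (a b c : E3) : triple a b c = triple b c a := by
  simp only [triple_apply]; ring

theorem triple_self_left (a c : E3) : triple a a c = 0 := by
  simp only [triple_apply]; ring

theorem triple_self_right (a b : E3) : triple a b b = 0 := by
  simp only [triple_apply]; ring

theorem triple_add_smul_left (a d b c : E3) (s : ℝ) :
    triple (a + s • d) b c = triple a b c + s * triple d b c := by
  simp only [triple_apply, PiLp.add_apply, PiLp.smul_apply, smul_eq_mul]; ring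

theorem triple_smul_right (a b c : E3) (s : ℝ) : triple a b (s • c) = s * triple a b c := by
  simp only [triple_apply, PiLp.smul_apply, smul_eq_mul]; ring

theorem triple_ne_zero_iff_linearIndependent :
    triple a b c ≠ 0 ↔ LinearIndependent ℝ ![a, b, c] := by
  rw [← isUnit_iff_ne_zero, triple, ← Basis.is_basis_iff_det]
  exact and_iff_left_of_imp fun h => h.span_eq_top_of_card_eq_finrank' (by simp)

theorem triple_ne_zero_iff_span_eq_top : triple a b c ≠ 0 ↔ span ℝ {a, b, c} = ⊤ := by
  have hrange : range ![a, b, c] = {a, b, c} := by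
    rw [Matrix.range_cons, Matrix.range_cons_cons_empty, singleton_union]
  rw [← isUnit_iff_ne_zero, triple, ← Basis.is_basis_iff_det, hrange]
  exact and_iff_right_of_imp fun h =>
    linearIndependent_of_top_le_span_of_card_eq_finrank (hrange ▸ h.ge) (by simp)

theorem triple_ne_zero_iff_notMem_span :
    triple a b c ≠ 0 ↔ LinearIndependent ℝ ![b, c] ∧ a ∉ span ℝ {b, c} := by
  rw [triple_ne_zero_iff_linearIndependent, ← Matrix.range_cons_cons_empty b c ![]]
  exact linearIndependent_finCons

theorem span_ne_top_of_triple_eq_zero (h : triple a b c = 0) : span ℝ {a, b, c} ≠ ⊤ :=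
  fun h' => triple_ne_zero_iff_span_eq_top.2 h' h

theorem triple_eq_zero_of_mem_span (h : a ∈ span ℝ {b, c}) : triple a b c = 0 :=
  not_not.1 fun h' => (triple_ne_zero_iff_notMem_span.1 h').2 h

theorem triple_sub_eq_zero_of_sub_mem_span {x y a' d' : E3} {t : ℝ} (hy : y = a' + t • d')
    (hxy : x - y ∈ ℝ ∙ e) : triple (x - a') d' e = 0 := by
  obtain ⟨c, hc⟩ := mem_span_singleton.1 hxy
  refine triple_eq_zero_of_mem_span (mem_span_pair.2 ⟨t, c, ?_⟩)
  rw [hc, hy]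
  abel

end TripleProduct

section Transversals

/-- The line through `a + s d` in direction `e` meets `a' + ℝ d'` only if
`triple (a - a') d' e + s * triple d d' e = 0`; eliminating `s` between this and the same
condition for `a'' + ℝ d''` gives a form vanishing on the directions of the common
transversals of the three lines. -/
noncomputable def transversalForm (a d a' d' a'' d'' e : E3) : ℝ :=
  triple (a - a') d' e * triple d d'' e - triple (a - a'') d'' e * triple d d' e

variable {a d a' d' a'' d'' e : E3}

theorem transversalForm_smul (c : ℝ) :
    transversalForm a d a' d' a'' d'' (c • e) = c ^ 2 * transversalForm a d a' d' a'' d'' e := by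
  simp only [transversalForm, triple_smul_right]; ring

theorem analyticOnNhd_transversalForm :
    AnalyticOnNhd ℝ (transversalForm a d a' d' a'' d'') univ := fun x _ => by
  have (i : Fin 3) : AnalyticAt ℝ (fun e : E3 => e i) x :=
    (EuclideanSpace.proj i : E3 →L[ℝ] ℝ).analyticAt x
  change AnalyticAt ℝ (fun e => transversalForm a d a' d' a'' d'' e) x
  simp only [transversalForm, triple_apply]
  fun_prop

theorem transversalForm_eq_zero {x y z : E3} {s t r : ℝ} (hx : x = a + s • d)
    (hy : y = a' + t • d') (hz : z = a'' + r • d'') (hxy : x - y ∈ ℝ ∙ e) (hxz : x - z ∈ ℝ ∙ e) :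
    transversalForm a d a' d' a'' d'' e = 0 := by
  have h' := triple_sub_eq_zero_of_sub_mem_span hy hxy
  have h'' := triple_sub_eq_zero_of_sub_mem_span hz hxz
  rw [hx, add_sub_right_comm, triple_add_smul_left] at h' h''
  unfold transversalForm
  linear_combination triple d d'' e * h' - triple d d' e * h''

theorem transversalForm_ne_zero (h' : triple d d' (a - a') ≠ 0) (h'' : triple d d'' (a - a'') ≠ 0)
    (h''' : triple d' d'' (a' - a'') ≠ 0) : transversalForm a d a' d' a'' d'' ≠ 0 := by
  intro h
  -- On the directions `e` of the lines joining `a + s d` to `a' + t d'` the form factors as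
  -- `triple d d' (a - a') * f s t`; the coefficients of `s` and `s * t` in `f` are tied to
  -- the other two skewness conditions by the identity `key`.
  set f : ℝ → ℝ → ℝ := fun s t => triple (a - a'' + s • d) d'' (a' - a + t • d' - s • d)
  have hf (s t : ℝ) : f s t = 0 := by
    have hQ : transversalForm a d a' d' a'' d'' (a' - a + t • d' - s • d) =
        triple d d' (a - a') * f s t := by
      simp only [f, transversalForm, triple_apply, PiLp.add_apply, PiLp.sub_apply,
        PiLp.smul_apply, smul_eq_mul]
      ring
    exact (mul_eq_zero.1 (hQ.symm.trans (congrFun h _))).resolve_left h'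
  have key : triple d d'' (a - a'') * triple d' d'' (a' - a'') =
      triple (a - a'') d'' (a' - a'') * (f 1 1 - f 1 0 - f 0 1 + f 0 0) +
        triple d' d'' (a - a'') * (f 1 0 - f 0 0) := by
    simp only [f, triple_apply, PiLp.add_apply, PiLp.sub_apply, PiLp.smul_apply, smul_eq_mul]
    ring
  simp only [hf, sub_zero, add_zero, mul_zero] at key
  exact mul_ne_zero h'' h''' key

/-- The point of `a + ℝ d` whose line in direction `e` meets `a' + ℝ d'`. -/
noncomputable def crossingPoint (a d a' d' e : E3) : E3 :=
  a + (-triple (a - a') d' e / triple d d' e) • d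

theorem eq_crossingPoint {x y : E3} {s t : ℝ} (hx : x = a + s • d) (hy : y = a' + t • d')
    (hxy : x - y ∈ ℝ ∙ e) (h : triple d d' e ≠ 0) : x = crossingPoint a d a' d' e := by
  have h' := triple_sub_eq_zero_of_sub_mem_span hy hxy
  rw [hx, add_sub_right_comm, triple_add_smul_left] at h'
  rw [hx, crossingPoint,
    (eq_div_iff h).2 (by linarith : s * triple d d' e = -triple (a - a') d' e)]

end Transversals

section Projection

variable {u x y a b : E3}

theorem projAlong_eq_projAlong_iff : projAlong u x = projAlong u y ↔ x - y ∈ ℝ ∙ u := by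
  rw [← sub_eq_zero, ← map_sub, projAlong, orthogonalProjectionOnto_eq_zero_iff,
    orthogonal_orthogonal]

theorem linearIndependent_projAlong (h : triple a b u ≠ 0) :
    LinearIndependent ℝ ![projAlong u a, projAlong u b] := by
  refine LinearIndependent.pair_iff.2 fun s t hst => ?_
  obtain ⟨c, hc⟩ := mem_span_singleton.1
    (projAlong_eq_projAlong_iff.1 (by simpa using hst) : s • a + t • b - 0 ∈ ℝ ∙ u)
  have := Fintype.linearIndependent_iff.1 (triple_ne_zero_iff_linearIndependent.1 h) ![s, t, -c]
    (by simp [Fin.sum_univ_three, hc])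
  exact ⟨this 0, this 1⟩

theorem norm_inv_norm_smul_sub_le {e : E3} (hu : ‖u‖ = 1) : ‖‖e‖⁻¹ • e - u‖ ≤ 2 * ‖e - u‖ := by
  rcases eq_or_ne e 0 with rfl | he
  · simp [hu]
  have hpos : 0 < ‖e‖ := norm_pos_iff.2 he
  have hnormalize : ‖‖e‖⁻¹ • e - e‖ = |‖u‖ - ‖e‖| := by
    rw [show ‖e‖⁻¹ • e - e = (‖e‖⁻¹ - 1) • e by rw [sub_smul, one_smul], norm_smul,
      Real.norm_eq_abs, hu, show 1 - ‖e‖ = (‖e‖⁻¹ - 1) * ‖e‖ by field_simp, abs_mul,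
      abs_of_pos hpos]
  calc ‖‖e‖⁻¹ • e - u‖ ≤ ‖‖e‖⁻¹ • e - e‖ + ‖e - u‖ := norm_sub_le_norm_sub_add_norm_sub _ _ _
    _ ≤ 2 * ‖e - u‖ := by linarith [abs_norm_sub_norm_le u e, norm_sub_rev u e]

end Projection

theorem Set.encard_le_two_of_forall {α : Type*} {s : Set α}
    (h : ∀ x ∈ s, ∀ y ∈ s, ∀ z ∈ s, x = y ∨ x = z ∨ y = z) : s.encard ≤ 2 := by
  by_contra! h2
  obtain ⟨t, hts, ht⟩ := exists_subset_encard_eq (Order.add_one_le_of_lt h2)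
  obtain ⟨x, y, z, hxy, hxz, hyz, rfl⟩ := encard_eq_three.1 ht
  rcases h x (hts (by simp)) y (hts (by simp)) z (hts (by simp)) with h | h | h <;> contradiction

section GenericDirection

variable {ι : Type*} (p : ι → E3)

def IsSkew (E F : ι × ι) : Prop :=
  triple (p E.2 - p E.1) (p F.2 - p F.1) (p E.1 - p F.1) ≠ 0

structure IsGenericDirection (e : E3) : Prop where
  notMem_span (a b c : ι × ι) :
    span ℝ {p a.2 - p a.1, p b.2 - p b.1, p c.2 - p c.1} ≠ ⊤ →
      e ∉ span ℝ {p a.2 - p a.1, p b.2 - p b.1, p c.2 - p c.1}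
  transversalForm_ne_zero (E F G : ι × ι) : IsSkew p E F → IsSkew p E G → IsSkew p F G →
    transversalForm (p E.1) (p E.2 - p E.1) (p F.1) (p F.2 - p F.1) (p G.1) (p G.2 - p G.1) e ≠ 0

theorem not_isSkew_self (E : ι × ι) : ¬IsSkew p E E :=
  not_not.2 (triple_self_left _ _)

theorem exists_isGenericDirection [Finite ι] (u : E3) {r : ℝ} (hr : 0 < r) :
    ∃ e ∈ ball u r, IsGenericDirection p e := by
  obtain ⟨e, he, hW, hf⟩ := exists_mem_ball_forall_notMem_and_ne_zero
    (fun abc : (ι × ι) × (ι × ι) × (ι × ι) =>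
      span ℝ {p abc.1.2 - p abc.1.1, p abc.2.1.2 - p abc.2.1.1, p abc.2.2.2 - p abc.2.2.1})
    (f := fun EFG : (ι × ι) × (ι × ι) × (ι × ι) =>
      transversalForm (p EFG.1.1) (p EFG.1.2 - p EFG.1.1) (p EFG.2.1.1)
        (p EFG.2.1.2 - p EFG.2.1.1) (p EFG.2.2.1) (p EFG.2.2.2 - p EFG.2.2.1))
    (fun _ => analyticOnNhd_transversalForm) u hr
  exact ⟨e, he, ⟨fun a b c => hW (a, b, c),
    fun E F G hEF hEG hFG => hf (E, F, G) (transversalForm_ne_zero hEF hEG hFG)⟩⟩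

namespace IsGenericDirection

variable {p} {u x y z : E3} {E F G : ι × ι} (hg : IsGenericDirection p u)
include hg

theorem ne_zero [Nonempty ι] : u ≠ 0 := by
  obtain ⟨k⟩ := ‹Nonempty ι›
  rintro rfl
  exact hg.notMem_span (k, k) (k, k) (k, k) (by simp) (zero_mem _)

theorem smul {c : ℝ} (hc : c ≠ 0) : IsGenericDirection p (c • u) where
  notMem_span a b c' h := (smul_mem_iff _ hc).not.2 (hg.notMem_span a b c' h)
  transversalForm_ne_zero E F G hEF hEG hFG := by
    rw [transversalForm_smul]
    exact mul_ne_zero (pow_ne_zero 2 hc) (hg.transversalForm_ne_zero E F G hEF hEG hFG)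

theorem isSkew (hx : x ∈ segment ℝ (p E.1) (p E.2)) (hy : y ∈ segment ℝ (p F.1) (p F.2))
    (hxy : x ≠ y) (h : projAlong u x = projAlong u y) : IsSkew p E F := by
  rw [segment_eq_image'] at hx hy
  obtain ⟨s, -, rfl⟩ := hx
  obtain ⟨t, -, rfl⟩ := hy
  by_contra hs
  refine hxy (eq_of_sub_mem_of_mem_span_singleton
    (hg.notMem_span E F (F.1, E.1) (span_ne_top_of_triple_eq_zero (not_not.1 hs))) ?_
    (projAlong_eq_projAlong_iff.1 h))
  rw [show p E.1 + s • (p E.2 - p E.1) - (p F.1 + t • (p F.2 - p F.1)) =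
    s • (p E.2 - p E.1) - t • (p F.2 - p F.1) + (p E.1 - p F.1) by abel]
  exact add_mem (sub_mem (smul_mem _ _ (subset_span (by simp)))
    (smul_mem _ _ (subset_span (by simp)))) (subset_span (by simp))

theorem eq_of_mem_range (hx : x ∈ range p) (hy : y ∈ segment ℝ (p F.1) (p F.2))
    (h : projAlong u x = projAlong u y) : x = y := by
  obtain ⟨k, rfl⟩ := hx
  rw [segment_eq_image'] at hy
  obtain ⟨t, -, rfl⟩ := hy
  refine eq_of_sub_mem_of_mem_span_singleton
    (hg.notMem_span (F.1, k) F F (span_ne_top_of_triple_eq_zero (triple_self_right _ _))) ?_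
    (projAlong_eq_projAlong_iff.1 h)
  rw [sub_add_eq_sub_sub]
  exact sub_mem (subset_span (by simp)) (smul_mem _ _ (subset_span (by simp)))

theorem triple_ne_zero (hs : IsSkew p E F) : triple (p E.2 - p E.1) (p F.2 - p F.1) u ≠ 0 := by
  rw [triple_rotate, triple_rotate, triple_ne_zero_iff_notMem_span]
  refine ⟨((triple_ne_zero_iff_notMem_span (a := p E.1 - p F.1)).1 ?_).1, ?_⟩
  · rwa [triple_rotate]
  · simpa using hg.notMem_span E F F (span_ne_top_of_triple_eq_zero (triple_self_right _ _))

theorem injOn_projAlong (E : ι × ι) : InjOn (projAlong u) (segment ℝ (p E.1) (p E.2)) :=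
  fun _ hx _ hy h => by_contra fun hxy => not_isSkew_self p E (hg.isSkew hx hy hxy h)

theorem eq_or_eq_or_eq (hx : x ∈ segment ℝ (p E.1) (p E.2)) (hy : y ∈ segment ℝ (p F.1) (p F.2))
    (hz : z ∈ segment ℝ (p G.1) (p G.2)) (hxy : projAlong u x = projAlong u y)
    (hxz : projAlong u x = projAlong u z) : x = y ∨ x = z ∨ y = z := by
  by_contra! hne
  have hEF := hg.isSkew hx hy hne.1 hxy
  have hEG := hg.isSkew hx hz hne.2.1 hxz
  have hFG := hg.isSkew hy hz hne.2.2 (hxy.symm.trans hxz)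
  rw [segment_eq_image'] at hx hy hz
  obtain ⟨s, -, rfl⟩ := hx
  obtain ⟨t, -, rfl⟩ := hy
  obtain ⟨r, -, rfl⟩ := hz
  exact hg.transversalForm_ne_zero E F G hEF hEG hFG (transversalForm_eq_zero rfl rfl rfl
    (projAlong_eq_projAlong_iff.1 hxy) (projAlong_eq_projAlong_iff.1 hxz))

variable {κ : Type*} (E : κ → ι × ι)

theorem encard_fiber_le_two (q : ↥((ℝ ∙ u)ᗮ)) :
    encard {x ∈ ⋃ k, segment ℝ (p (E k).1) (p (E k).2) | projAlong u x = q} ≤ 2 :=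
  encard_le_two_of_forall fun x ⟨hx, hxq⟩ y ⟨hy, hyq⟩ z ⟨hz, hzq⟩ => by
    obtain ⟨i, hi⟩ := mem_iUnion.1 hx
    obtain ⟨j, hj⟩ := mem_iUnion.1 hy
    obtain ⟨k, hk⟩ := mem_iUnion.1 hz
    exact hg.eq_or_eq_or_eq hi hj hk (hxq.trans hyq.symm) (hxq.trans hzq.symm)

theorem finite_setOf_encard_fiber_eq_two [Finite κ] :
    {q : ↥((ℝ ∙ u)ᗮ) |
      encard {x ∈ ⋃ k, segment ℝ (p (E k).1) (p (E k).2) | projAlong u x = q} = 2}.Finite := by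
  refine (finite_range fun kl : κ × κ => projAlong u (crossingPoint (p (E kl.1).1)
    (p (E kl.1).2 - p (E kl.1).1) (p (E kl.2).1) (p (E kl.2).2 - p (E kl.2).1) u)).subset ?_
  intro q hq
  obtain ⟨x, y, hxy, hset⟩ := encard_eq_two.1 hq
  have hmem : x ∈ {x ∈ ⋃ k, segment ℝ (p (E k).1) (p (E k).2) | projAlong u x = q} ∧
      y ∈ {x ∈ ⋃ k, segment ℝ (p (E k).1) (p (E k).2) | projAlong u x = q} := by
    rw [hset]
    exact ⟨mem_insert _ _, mem_insert_of_mem _ rfl⟩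
  obtain ⟨⟨hx, rfl⟩, hy, hyx⟩ := hmem
  obtain ⟨k, hk⟩ := mem_iUnion.1 hx
  obtain ⟨l, hl⟩ := mem_iUnion.1 hy
  have hs := hg.isSkew hk hl hxy hyx.symm
  rw [segment_eq_image'] at hk hl
  obtain ⟨s, -, rfl⟩ := hk
  obtain ⟨t, -, rfl⟩ := hl
  exact ⟨(k, l), congrArg _ (eq_crossingPoint rfl rfl
    (projAlong_eq_projAlong_iff.1 hyx.symm) (hg.triple_ne_zero hs)).symm⟩

end IsGenericDirection

end GenericDirection

theorem unique_diagram_existence_general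
    (n : ℕ) (p : Fin (n + 1) → E3)
    (u : E3) (hu : ‖u‖ = 1) (δ : ℝ) (hδ : 0 < δ) :
    ∃ u' : E3, ‖u'‖ = 1 ∧ ‖u' - u‖ < δ ∧
      (∀ i : Fin n, Set.InjOn (projAlong u') (segment ℝ (p i.castSucc) (p i.succ))) ∧
      (∀ q : ↥((ℝ ∙ u')ᗮ),
        Set.encard {x ∈ ⋃ i : Fin n, segment ℝ (p i.castSucc) (p i.succ) |
          projAlong u' x = q} ≤ 2) ∧
      (∀ x y : E3,
        x ∈ (⋃ i : Fin n, segment ℝ (p i.castSucc) (p i.succ)) →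
        y ∈ (⋃ i : Fin n, segment ℝ (p i.castSucc) (p i.succ)) →
        x ≠ y → projAlong u' x = projAlong u' y →
          x ∉ Set.range p ∧ y ∉ Set.range p ∧
          ∃ i j : Fin n, i ≠ j ∧
            x ∈ segment ℝ (p i.castSucc) (p i.succ) ∧
            y ∈ segment ℝ (p j.castSucc) (p j.succ) ∧
            LinearIndependent ℝ
              ![projAlong u' (p i.succ - p i.castSucc),
                projAlong u' (p j.succ - p j.castSucc)]) ∧
      {q : ↥((ℝ ∙ u')ᗮ) |
        Set.encard {x ∈ ⋃ i : Fin n, segment ℝ (p i.castSucc) (p i.succ) |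
          projAlong u' x = q} = 2}.Finite := by
  obtain ⟨e, he, hg⟩ := exists_isGenericDirection p u (half_pos hδ)
  have he0 : e ≠ 0 := hg.ne_zero
  have hg' := hg.smul (inv_ne_zero (norm_ne_zero_iff.2 he0))
  let edge (i : Fin n) : Fin (n + 1) × Fin (n + 1) := (i.castSucc, i.succ)
  refine ⟨‖e‖⁻¹ • e, norm_smul_inv_norm he0, ?_, fun i => hg'.injOn_projAlong (edge i),
    hg'.encard_fiber_le_two edge, ?_, hg'.finite_setOf_encard_fiber_eq_two edge⟩
  · calc ‖‖e‖⁻¹ • e - u‖ ≤ 2 * ‖e - u‖ := norm_inv_norm_smul_sub_le hu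
      _ < δ := by rw [mem_ball, dist_eq_norm] at he; linarith
  · intro x y hx hy hxy hq
    obtain ⟨i, hi⟩ := mem_iUnion.1 hx
    obtain ⟨j, hj⟩ := mem_iUnion.1 hy
    have hs := hg'.isSkew (E := edge i) (F := edge j) hi hj hxy hq
    have hli := linearIndependent_projAlong (hg'.triple_ne_zero hs)
    refine ⟨fun hxp => hxy (hg'.eq_of_mem_range (F := edge j) hxp hj hq),
      fun hyp => hxy (hg'.eq_of_mem_range (F := edge i) hyp hi hq.symm).symm, i, j, ?_, hi, hj,
      hli⟩
    rintro rfl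
    exact not_isSkew_self p _ hs

/-- **Existence part of Theorem 1.1.** For an embedded polygonal arc `L` in ℝ³ with
vertices `p 0, …, p n` (`n ≥ 1`), any unit vector `u` and any `δ > 0`, there is a unit
vector `u'` with `‖u' - u‖ < δ` such that the projection along `u'` maps `L` to an arc
diagram: it is injective on each edge, every point of the plane has at most two preimages
in `L`, double points come from interior points of two distinct edges whose projected
directions are linearly independent, and there are only finitely many double points. -/
theorem unique_diagram_existence
    (n : ℕ) (hn : 1 ≤ n) (p : Fin (n + 1) → E3)
    (hpe : ∀ i : Fin n, p i.castSucc ≠ p i.succ)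
    (hemb : ∀ i j : Fin n, (i : ℕ) < (j : ℕ) →
      (((j : ℕ) = (i : ℕ) + 1 →
          segment ℝ (p i.castSucc) (p i.succ) ∩ segment ℝ (p j.castSucc) (p j.succ)
            = {p i.succ}) ∧
        ((j : ℕ) ≠ (i : ℕ) + 1 →
          segment ℝ (p i.castSucc) (p i.succ) ∩ segment ℝ (p j.castSucc) (p j.succ)
            = ∅)))
    (u : E3) (hu : ‖u‖ = 1) (δ : ℝ) (hδ : 0 < δ) :
    ∃ u' : E3, ‖u'‖ = 1 ∧ ‖u' - u‖ < δ ∧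
      (∀ i : Fin n, Set.InjOn (projAlong u') (segment ℝ (p i.castSucc) (p i.succ))) ∧
      (∀ q : ↥((ℝ ∙ u')ᗮ),
        Set.encard {x ∈ ⋃ i : Fin n, segment ℝ (p i.castSucc) (p i.succ) |
          projAlong u' x = q} ≤ 2) ∧
      (∀ x y : E3,
        x ∈ (⋃ i : Fin n, segment ℝ (p i.castSucc) (p i.succ)) →
        y ∈ (⋃ i : Fin n, segment ℝ (p i.castSucc) (p i.succ)) →
        x ≠ y → projAlong u' x = projAlong u' y →
          x ∉ Set.range p ∧ y ∉ Set.range p ∧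
          ∃ i j : Fin n, i ≠ j ∧
            x ∈ segment ℝ (p i.castSucc) (p i.succ) ∧
            y ∈ segment ℝ (p j.castSucc) (p j.succ) ∧
            LinearIndependent ℝ
              ![projAlong u' (p i.succ - p i.castSucc),
                projAlong u' (p j.succ - p j.castSucc)]) ∧
      {q : ↥((ℝ ∙ u')ᗮ) |
        Set.encard {x ∈ ⋃ i : Fin n, segment ℝ (p i.castSucc) (p i.succ) |
          projAlong u' x = q} = 2}.Finite :=
  unique_diagram_existence_general n p u hu δ hδ
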